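/- arXiv:0911.0336 — 11 statements merged into one kernel-verified Lean document; each statement's English description precedes it below -/
import Mathlib

section
/- For λ ∈ (-1,1), the 5×5 matrix H(λ) of the discrete PT-symmetric square well (tridiagonal with diagonal 2, subdiagonal (-1+λ,-1,-1,-1-λ) reading (i+1,i) entries (−1+λ,−1,−1,−1−λ) and superdiagonal (−1−λ,−1,−1,−1+λ)) has the five real eigenvalues 2, 2±√(1-λ²), 2±√(3-λ²), all distinct. -/
open Matrix Polynomial

/-- The N×N discrete PT-symmetric square-well Hamiltonian (0-indexed). -/
noncomputable def Ham (N : ℕ) (l : ℝ) : Matrix (Fin N) (Fin N) ℝ :=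
  Matrix.of fun i j =>
    if (i : ℕ) = j then 2
    else if (j : ℕ) = (i : ℕ) + 1 then
      (if (i : ℕ) = 0 then -1 - l else if (j : ℕ) = N - 1 then -1 + l else -1)
    else if (i : ℕ) = (j : ℕ) + 1 then
      (if (j : ℕ) = 0 then -1 + l else if (i : ℕ) = N - 1 then -1 - l else -1)
    else 0

lemma scalar_sub_Ham_five (l x : ℝ) :
    scalar (Fin 5) x - Ham 5 l =
      !![x - 2, 1 + l, 0, 0, 0;
         1 - l, x - 2, 1, 0, 0;
         0, 1, x - 2, 1, 0;
         0, 0, 1, x - 2, 1 - l;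
         0, 0, 0, 1 + l, x - 2] := by
  ext i j
  fin_cases i <;> fin_cases j <;> simp [Ham] <;> ring

lemma eval_charpoly_Ham_five (l x : ℝ) :
    (Ham 5 l).charpoly.eval x =
      (x - 2) * ((x - 2) ^ 2 - (1 - l ^ 2)) * ((x - 2) ^ 2 - (3 - l ^ 2)) := by
  rw [eval_charpoly, scalar_sub_Ham_five, det_succ_row_zero]
  simp [Fin.sum_univ_succ, det_succ_row_zero, Fin.succAbove]
  ring

lemma isRoot_charpoly_Ham_five_iff (l x : ℝ) :
    (Ham 5 l).charpoly.IsRoot x ↔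
      x = 2 ∨ (x - 2) ^ 2 = 1 - l ^ 2 ∨ (x - 2) ^ 2 = 3 - l ^ 2 := by
  simp only [IsRoot, eval_charpoly_Ham_five, mul_eq_zero, sub_eq_zero, or_assoc]

lemma pairwise_ne_center_add_sub {α : Type*} [Field α] [LinearOrder α] [IsStrictOrderedRing α]
    {a s t : α} (hs : 0 < s) (hst : s < t) :
    List.Pairwise (· ≠ ·) [a, a + s, a - s, a + t, a - t] := by
  simp only [List.pairwise_cons, List.mem_cons, List.not_mem_nil, or_false, forall_eq_or_imp,
    forall_eq, List.Pairwise.nil, IsEmpty.forall_iff, implies_true, and_true]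
  refine ⟨⟨?_, ?_, ?_, ?_⟩, ⟨?_, ?_, ?_⟩, ⟨?_, ?_⟩, ?_⟩ <;> intro h <;> linarith

theorem stmt2 (l : ℝ) (hl : l ∈ Set.Ioo (-1 : ℝ) 1) :
    (∀ x ∈ [2, 2 + Real.sqrt (1 - l ^ 2), 2 - Real.sqrt (1 - l ^ 2),
            2 + Real.sqrt (3 - l ^ 2), 2 - Real.sqrt (3 - l ^ 2)],
        (Ham 5 l).charpoly.IsRoot x) ∧
    List.Pairwise (· ≠ ·)
      [2, 2 + Real.sqrt (1 - l ^ 2), 2 - Real.sqrt (1 - l ^ 2),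
       2 + Real.sqrt (3 - l ^ 2), 2 - Real.sqrt (3 - l ^ 2)] := by
  have hpos : 0 < 1 - l ^ 2 := by nlinarith [hl.1, hl.2]
  have hlt : 1 - l ^ 2 < 3 - l ^ 2 := by linarith
  refine ⟨?_, pairwise_ne_center_add_sub (Real.sqrt_pos.mpr hpos) (Real.sqrt_lt_sqrt hpos.le hlt)⟩
  simp only [List.mem_cons, List.not_mem_nil, or_false, forall_eq_or_imp, forall_eq,
    isRoot_charpoly_Ham_five_iff, add_sub_cancel_left, sub_sub_cancel_left, neg_sq,
    Real.sq_sqrt hpos.le, Real.sq_sqrt (hpos.trans hlt).le]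
  tauto
end

section
/- For λ ∈ (-1,1) and any N ≥ 3, the diagonal N×N matrix Θ with Θ₁₁ = Θ_NN = (1-λ)/(1+λ) and Θ_kk = 1 for 1 < k < N satisfies H(λ)† Θ = Θ H(λ), where H(λ) is the N×N discrete PT-symmetric square-well Hamiltonian. -/
open Matrix Polynomial

/-- The diagonal metric with first and last entries (1-λ)/(1+λ). -/
noncomputable def Theta (N : ℕ) (l : ℝ) : Matrix (Fin N) (Fin N) ℝ :=
  Matrix.diagonal fun k => if (k : ℕ) = 0 ∨ (k : ℕ) = N - 1 then (1 - l) / (1 + l) else 1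

theorem Matrix.IsDiag.transpose_mul_eq_mul_iff {n α : Type*} [Fintype n] [DecidableEq n]
    [NonUnitalNonAssocSemiring α] {A D : Matrix n n α} (hD : D.IsDiag) :
    Aᵀ * D = D * A ↔ ∀ i j, A j i * D j j = D i i * A i j := by
  rw [← hD.diagonal_diag, ← Matrix.ext_iff]
  simp only [mul_diagonal, diagonal_mul, transpose_apply, diagonal_apply_eq, diag_apply]

theorem Theta_isDiag (N : ℕ) (l : ℝ) : (Theta N l).IsDiag := isDiag_diagonal _

/-- `Θ H` is symmetric: at the two boundary bonds the weight `(1 - λ) / (1 + λ)` turns the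
non-Hermitian hopping `-1 - λ` into its mirror `-1 + λ`. -/
theorem Ham_apply_mul_Theta_apply {N : ℕ} (hN : 3 ≤ N) {l : ℝ} (hl : 1 + l ≠ 0) (i j : Fin N) :
    Ham N l j i * Theta N l j j = Theta N l i i * Ham N l i j := by
  have hi := i.isLt
  have hj := j.isLt
  simp only [Ham, Theta, of_apply, diagonal_apply_eq]
  split_ifs <;> first | rfl | (exfalso; omega) | ring1 | (field_simp; ring1)

theorem stmt3 (N : ℕ) (hN : 3 ≤ N) (l : ℝ) (hl : l ∈ Set.Ioo (-1 : ℝ) 1) :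
    (Ham N l)ᵀ * Theta N l = Theta N l * Ham N l :=
  (Theta_isDiag N l).transpose_mul_eq_mul_iff.mpr
    (Ham_apply_mul_Theta_apply hN (by linarith [hl.1]))
end

section
/- For any N ≥ 3 and λ ∈ (-1,1), all eigenvalues of the N×N discrete PT-symmetric square-well Hamiltonian H(λ) are real. -/
/-!
`Θ H` is symmetric for the positive diagonal metric `Θ`, so `H` is self-adjoint for the inner
product `⟨u, v⟩_Θ = u* Θ v`. For an eigenpair `H v = z v` this gives
`z ⟨v, v⟩_Θ = ⟨v, H v⟩_Θ = ⟨H v, v⟩_Θ = z̄ ⟨v, v⟩_Θ`, and `⟨v, v⟩_Θ > 0` forces `z = z̄`.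
-/

open Matrix Polynomial

namespace Matrix

variable {n R : Type*} [Fintype n]

lemma IsHermitian.isSelfAdjoint_star_dotProduct_mulVec [CommRing R] [StarRing R]
    {M : Matrix n n R} (hM : M.IsHermitian) (v : n → R) :
    IsSelfAdjoint (star v ⬝ᵥ (M *ᵥ v)) := by
  rw [IsSelfAdjoint]
  conv_lhs => rw [Matrix.star_dotProduct, star_star, star_mulVec, hM.eq]
  exact (dotProduct_mulVec _ _ _).symm

variable [Field R] [PartialOrder R] [StarRing R] [StarOrderedRing R]

theorem PosDef.isSelfAdjoint_of_mulVec_eq_smul {Θ A : Matrix n n R} (hΘ : Θ.PosDef)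
    (hΘA : (Θ * A).IsHermitian) {v : n → R} (hv : v ≠ 0) {z : R} (hz : A *ᵥ v = z • v) :
    IsSelfAdjoint z := by
  set c := star v ⬝ᵥ (Θ *ᵥ v)
  have hc : 0 < c := hΘ.dotProduct_mulVec_pos hv
  have hform : star v ⬝ᵥ ((Θ * A) *ᵥ v) = z * c := by
    rw [← mulVec_mulVec, hz, mulVec_smul, dotProduct_smul, smul_eq_mul]
  have hself := hΘA.isSelfAdjoint_star_dotProduct_mulVec v
  rw [hform, IsSelfAdjoint, star_mul', (IsSelfAdjoint.of_nonneg hc.le).star_eq] at hself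
  exact mul_right_cancel₀ hc.ne' hself

theorem PosDef.isSelfAdjoint_of_isRoot_charpoly [DecidableEq n] {Θ A : Matrix n n R}
    (hΘ : Θ.PosDef) (hΘA : (Θ * A).IsHermitian) {z : R} (hz : A.charpoly.IsRoot z) : IsSelfAdjoint z := by
  rw [← charpoly_toLin', ← Module.End.hasEigenvalue_iff_isRoot_charpoly] at hz
  obtain ⟨v, hv⟩ := hz.exists_hasEigenvector
  exact hΘ.isSelfAdjoint_of_mulVec_eq_smul hΘA hv.2 (by rw [← toLin'_apply, hv.apply_eq_smul])

end Matrix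

open scoped ComplexOrder

noncomputable def hamMetric (N : ℕ) (l : ℝ) (k : Fin N) : ℝ :=
  if (k : ℕ) = 0 ∨ (k : ℕ) = N - 1 then (1 - l) / (1 + l) else 1

lemma hamMetric_pos {N : ℕ} {l : ℝ} (hl : l ∈ Set.Ioo (-1 : ℝ) 1) (k : Fin N) :
    0 < hamMetric N l k := by
  obtain ⟨hl₁, hl₂⟩ := hl
  unfold hamMetric
  split_ifs
  · exact div_pos (by linarith) (by linarith)
  · exact one_pos

lemma posDef_diagonal_hamMetric {N : ℕ} {l : ℝ} (hl : l ∈ Set.Ioo (-1 : ℝ) 1) :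
    (diagonal fun k => (hamMetric N l k : ℂ)).PosDef :=
  .diagonal fun k => Complex.zero_lt_real.2 (hamMetric_pos hl k)

lemma hamMetric_mul_ham_comm {N : ℕ} (hN : 3 ≤ N) {l : ℝ} (hl : 1 + l ≠ 0) (i j : Fin N) :
    hamMetric N l i * Ham N l i j = hamMetric N l j * Ham N l j i := by
  have hi := i.isLt
  have hj := j.isLt
  simp only [Ham, Matrix.of_apply, hamMetric]
  split_ifs <;> first | omega | (field_simp; try ring)

lemma isHermitian_diagonal_hamMetric_mul_ham {N : ℕ} (hN : 3 ≤ N) {l : ℝ} (hl : 1 + l ≠ 0) :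
    (diagonal (fun k => (hamMetric N l k : ℂ)) * (Ham N l).map Complex.ofReal).IsHermitian := by
  refine IsHermitian.ext fun i j => ?_
  simp only [diagonal_mul, Matrix.map_apply, star_mul', RCLike.star_def, Complex.conj_ofReal]
  exact_mod_cast hamMetric_mul_ham_comm hN hl j i

theorem stmt5 (N : ℕ) (hN : 3 ≤ N) (l : ℝ) (hl : l ∈ Set.Ioo (-1 : ℝ) 1) :
    ∀ z : ℂ, ((Ham N l).map Complex.ofReal).charpoly.IsRoot z → z.im = 0 := by
  intro z hz
  have hΘH := isHermitian_diagonal_hamMetric_mul_ham hN (l := l) (by linarith [hl.1])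
  exact Complex.conj_eq_iff_im.1
    ((posDef_diagonal_hamMetric hl).isSelfAdjoint_of_isRoot_charpoly hΘH hz)
end

section
/- For λ ∈ (-1,1) and N ≥ 3, the antidiagonal matrix Q with Q_{1,N} = Q_{N,1} = (1-λ)/(1+λ), Q_{k,N+1-k} = 1 for 1 < k < N, and all other entries zero, satisfies H(λ)ᵀ Q = Q H(λ). -/
open Matrix Polynomial

/-- The antidiagonal pseudometric. -/
noncomputable def Q (N : ℕ) (l : ℝ) : Matrix (Fin N) (Fin N) ℝ :=
  Matrix.of fun i j =>
    if (i : ℕ) + (j : ℕ) = N - 1 then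
      (if (i : ℕ) = 0 ∨ (i : ℕ) = N - 1 then (1 - l) / (1 + l) else 1)
    else 0

set_option maxHeartbeats 2000000 in
theorem stmt6 (N : ℕ) (hN : 3 ≤ N) (l : ℝ) (hl : l ∈ Set.Ioo (-1 : ℝ) 1) :
    (Ham N l)ᵀ * Q N l = Q N l * Ham N l := by
  obtain ⟨hl1, hl2⟩ := hl
  have h1 : (1:ℝ) + l ≠ 0 := by nlinarith
  ext i j
  have hi : (i : ℕ) < N := i.isLt
  have hj : (j : ℕ) < N := j.isLt
  rw [mul_apply, mul_apply,
    Finset.sum_eq_single (⟨N - 1 - (j : ℕ), by omega⟩ : Fin N),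
    Finset.sum_eq_single (⟨N - 1 - (i : ℕ), by omega⟩ : Fin N)]
  · simp only [transpose_apply, Ham, Q, of_apply]
    have e1 : (N - 1 - (j : ℕ)) + (j : ℕ) = N - 1 := by omega
    have e2 : (i : ℕ) + (N - 1 - (i : ℕ)) = N - 1 := by omega
    simp only [Fin.val_mk, e1, e2, if_true]
    split_ifs <;> first
      | (exfalso; omega)
      | rfl
      | ring1
      | (field_simp; ring1)
  · intro k _ hk
    have : (i : ℕ) + (k : ℕ) ≠ N - 1 := by
      intro h
      exact hk (Fin.ext (by simp; omega))
    simp [Q, this]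
  · intro h; exact absurd (Finset.mem_univ _) h
  · intro k _ hk
    have : (k : ℕ) + (j : ℕ) ≠ N - 1 := by
      intro h
      exact hk (Fin.ext (by simp; omega))
    simp [Q, this]
  · intro h; exact absurd (Finset.mem_univ _) h
end

section
/- For λ ∈ (-1,1) and N ≥ 3, the real symmetric matrix P₂ with P₂_{1,2} = P₂_{2,1} = P₂_{N-1,N} = P₂_{N,N-1} = 1-λ, P₂_{k,k+1} = P₂_{k+1,k} = 1 for 2 ≤ k ≤ N-2, and zeros elsewhere, satisfies H(λ)ᵀ P₂ = P₂ H(λ). -/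
open Matrix Polynomial

/-- The bidiagonal pseudometric. -/
noncomputable def P2 (N : ℕ) (l : ℝ) : Matrix (Fin N) (Fin N) ℝ :=
  Matrix.of fun i j =>
    if (j : ℕ) = (i : ℕ) + 1 ∨ (i : ℕ) = (j : ℕ) + 1 then
      (if min (i : ℕ) (j : ℕ) = 0 ∨ min (i : ℕ) (j : ℕ) = N - 2 then 1 - l else 1)
    else 0

/-! Since `P₂` is symmetric, `Hᵀ P₂ = (P₂ H)ᵀ`, so the claim is that `P₂ H` is symmetric. For a
hollow tridiagonal `P` and a tridiagonal `H`, the product `P H` is pentadiagonal; with `P` symmetric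
and the diagonal of `H` constant, its entries on and next to the diagonal are automatically
symmetric, and symmetry at distance two is the balance condition
`P i (i+1) * H (i+1) (i+2) = H (i+1) i * P (i+1) (i+2)`, a finite check on the explicit entries. -/

namespace Matrix

variable {R : Type*} [CommSemiring R] {n : ℕ}

def IsTridiag (A : Matrix (Fin n) (Fin n) R) : Prop :=
  ∀ i j : Fin n, (i : ℕ) + 1 < j ∨ (j : ℕ) + 1 < i → A i j = 0

section HollowTridiag

variable {P H : Matrix (Fin n) (Fin n) R}
  (hP : P.IsTridiag) (hP₀ : ∀ i, P i i = 0) (hH : H.IsTridiag)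
include hP hP₀ hH

theorem IsTridiag.mul_apply_eq_zero_of_not_near {i j k : Fin n}
    (h : (j : ℕ) ≠ i + 1 ∧ (i : ℕ) ≠ j + 1 ∨ (k : ℕ) + 1 < j ∨ (j : ℕ) + 1 < k) :
    P i j * H j k = 0 := by
  rcases h with ⟨hji, hij⟩ | hjk
  · obtain rfl | hne := eq_or_ne i j
    · rw [hP₀, zero_mul]
    · rw [hP i j (by have := Fin.val_ne_of_ne hne; omega), zero_mul]
  · rw [hH j k (by omega), mul_zero]

theorem IsTridiag.mul_apply_eq_zero {i k : Fin n}
    (hik : (i : ℕ) + 3 ≤ k ∨ (k : ℕ) + 3 ≤ i) : (P * H) i k = 0 :=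
  Fintype.sum_eq_zero _ fun j =>
    hP.mul_apply_eq_zero_of_not_near hP₀ hH (i := i) (j := j) (k := k) (by omega)

/-- If `i ≠ k`, at most one index `j` is adjacent to `i` and within distance one of `k`. -/
theorem IsTridiag.mul_apply_eq_single {i j k : Fin n}
    (hij : (j : ℕ) = i + 1 ∨ (i : ℕ) = j + 1) (hjk : (j : ℕ) ≤ k + 1 ∧ (k : ℕ) ≤ j + 1)
    (hik : i ≠ k) : (P * H) i k = P i j * H j k := by
  have hik' := Fin.val_ne_of_ne hik
  refine Fintype.sum_eq_single j fun j' hj' => ?_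
  have := Fin.val_ne_of_ne hj'
  exact hP.mul_apply_eq_zero_of_not_near hP₀ hH (by omega)

theorem IsTridiag.transpose_mul_eq_mul (hPs : P.IsSymm) {c : R} (hHdiag : ∀ i, H i i = c)
    (hbal : ∀ i j k : Fin n, (j : ℕ) = i + 1 → (k : ℕ) = j + 1 → P i j * H j k = H j i * P j k) :
    Hᵀ * P = P * H := by
  have hPs' : ∀ i j, P i j = P j i := fun i j => hPs.apply j i
  rw [← hPs, ← transpose_mul, hPs]
  ext i k
  rw [transpose_apply]
  wlog hle : (i : ℕ) ≤ k generalizing i k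
  · exact (this k i (by omega)).symm
  obtain hk | hk | hk | hk :
      (k : ℕ) = i ∨ (k : ℕ) = i + 1 ∨ (k : ℕ) = i + 2 ∨ (i : ℕ) + 3 ≤ k := by
    omega
  · rw [Fin.ext hk]
  · have hne : i ≠ k := Fin.ne_of_val_ne (by omega)
    rw [hP.mul_apply_eq_single hP₀ hH (j := i) (by omega) (by omega) hne.symm,
      hP.mul_apply_eq_single hP₀ hH (j := k) (by omega) (by omega) hne, hHdiag, hHdiag, hPs']
  · have hne : i ≠ k := Fin.ne_of_val_ne (by omega)
    let j : Fin n := ⟨i + 1, by omega⟩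
    rw [hP.mul_apply_eq_single hP₀ hH (j := j) (by simp [j]; omega) (by simp [j]; omega)
        hne.symm,
      hP.mul_apply_eq_single hP₀ hH (j := j) (by simp [j]) (by simp [j]; omega) hne,
      hbal i j k rfl (by simp [j]; omega), hPs' k j, mul_comm]
  · rw [hP.mul_apply_eq_zero hP₀ hH (Or.inr hk), hP.mul_apply_eq_zero hP₀ hH (Or.inl hk)]

end HollowTridiag

end Matrix

theorem Ham_isTridiag (N : ℕ) (l : ℝ) : (Ham N l).IsTridiag := by
  intro i j h
  simp only [Ham, of_apply]
  rw [if_neg (by omega), if_neg (by omega), if_neg (by omega)]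

theorem P2_isTridiag (N : ℕ) (l : ℝ) : (P2 N l).IsTridiag := fun i j h => by
  simp only [P2, of_apply]
  rw [if_neg (by omega)]

theorem P2_apply_self (N : ℕ) (l : ℝ) (i : Fin N) : P2 N l i i = 0 := by
  simp [P2]

theorem P2_isSymm (N : ℕ) (l : ℝ) : (P2 N l).IsSymm := by
  ext i j
  simp only [transpose_apply, P2, of_apply, min_comm (j : ℕ), or_comm]

theorem Ham_apply_self (N : ℕ) (l : ℝ) (i : Fin N) : Ham N l i i = 2 := by
  simp [Ham]

theorem P2_mul_Ham_balanced (N : ℕ) (l : ℝ) (i j k : Fin N) (hj : (j : ℕ) = i + 1)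
    (hk : (k : ℕ) = j + 1) : P2 N l i j * Ham N l j k = Ham N l j i * P2 N l j k := by
  have := k.isLt
  simp only [P2, Ham, of_apply]
  split_ifs <;> first | omega | ring1

theorem stmt8_general (N : ℕ) (l : ℝ) :
    (Ham N l)ᵀ * P2 N l = P2 N l * Ham N l :=
  (P2_isTridiag N l).transpose_mul_eq_mul (P2_apply_self N l) (Ham_isTridiag N l)
    (P2_isSymm N l) (Ham_apply_self N l) (P2_mul_Ham_balanced N l)

theorem stmt8 (N : ℕ) (hN : 3 ≤ N) (l : ℝ) (hl : l ∈ Set.Ioo (-1 : ℝ) 1) :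
    (Ham N l)ᵀ * P2 N l = P2 N l * Ham N l :=
  stmt8_general N l
end

section
/- For λ ∈ (-1,1) and N ≥ 3, the real symmetric matrix P_{N-1} defined by P_{N-1}(k, N-k) = 1-λ for k ∈ {1, N-1}, P_{N-1}(k, N-k) = 1 for 2 ≤ k ≤ N-2, P_{N-1}(k, N+2-k) = 1-λ for k ∈ {2, N}, P_{N-1}(k, N+2-k) = 1 for 3 ≤ k ≤ N-1, and zeros elsewhere, satisfies H(λ)ᵀ P_{N-1} = P_{N-1} H(λ). -/
open Matrix Polynomial

/-- The anti-bidiagonal pseudometric (0-indexed: antidiagonals i+j = N-2 and i+j = N). -/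
noncomputable def Pantibi (N : ℕ) (l : ℝ) : Matrix (Fin N) (Fin N) ℝ :=
  Matrix.of fun i j =>
    if (i : ℕ) + (j : ℕ) = N - 2 then
      (if (i : ℕ) = 0 ∨ (j : ℕ) = 0 then 1 - l else 1)
    else if (i : ℕ) + (j : ℕ) = N then
      (if (i : ℕ) = N - 1 ∨ (j : ℕ) = N - 1 then 1 - l else 1)
    else 0

/-!
Call `M` a pseudometric for `H` when `Hᵀ * M = M * H`. Pseudometrics for `H` are stable under
right multiplication by matrices commuting with `H` and, since `H(λ)` is centrosymmetric
(`J H J = H` for the reversal `J`), under reversing the order of the columns. The tridiagonal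
`H(λ)` has the diagonal pseudometric `D = diag(1-λ, 1+λ, …, 1+λ, 1-λ)`, and reversing the
columns of `(1 + λ) P_{N-1}` gives exactly the tridiagonal matrix `D (2 - H)`. Dividing by
`1 + λ ≠ 0` proves the claim.
-/

def IsPseudometric {n R : Type*} [Fintype n] [CommRing R] (H M : Matrix n n R) : Prop :=
  Hᵀ * M = M * H

namespace IsPseudometric

variable {n R : Type*} [Fintype n] [CommRing R] {H M : Matrix n n R}

theorem mul_of_commute (hM : IsPseudometric H M) {C : Matrix n n R} (hC : Commute H C) :
    IsPseudometric H (M * C) := by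
  unfold IsPseudometric at *
  rw [← Matrix.mul_assoc, hM, Matrix.mul_assoc, hC.eq, Matrix.mul_assoc]

theorem submatrix_id_equiv (hM : IsPseudometric H M) (e : n ≃ n) (hH : H.submatrix e e = H) :
    IsPseudometric H (M.submatrix id e) := by
  unfold IsPseudometric at *
  calc Hᵀ * M.submatrix id e = Hᵀ.submatrix id id * M.submatrix id e := by rw [submatrix_id_id]
    _ = (Hᵀ * M).submatrix id e := (submatrix_mul _ _ _ _ _ Function.bijective_id).symm
    _ = (M * H).submatrix id e := by rw [hM]
    _ = M.submatrix id e * H.submatrix e e := submatrix_mul _ _ _ _ _ e.bijective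
    _ = M.submatrix id e * H := by rw [hH]

theorem of_smul [IsDomain R] {c : R} (hc : c ≠ 0) (h : IsPseudometric H (c • M)) :
    IsPseudometric H M := by
  unfold IsPseudometric at *
  rw [Matrix.mul_smul, Matrix.smul_mul] at h
  exact smul_right_injective _ hc h

end IsPseudometric

theorem Ham_submatrix_rev {N : ℕ} (hN : 3 ≤ N) (l : ℝ) :
    (Ham N l).submatrix Fin.revPerm Fin.revPerm = Ham N l := by
  ext i j
  have hi := i.isLt
  have hj := j.isLt
  simp only [submatrix_apply, Fin.revPerm_apply, Ham, of_apply, Fin.val_rev]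
  split_ifs <;> first | rfl | omega

noncomputable def hamSymmetrizer (N : ℕ) (l : ℝ) : Matrix (Fin N) (Fin N) ℝ :=
  diagonal fun i => if (i : ℕ) = 0 ∨ (i : ℕ) = N - 1 then 1 - l else 1 + l

theorem isPseudometric_hamSymmetrizer {N : ℕ} (hN : 3 ≤ N) (l : ℝ) :
    IsPseudometric (Ham N l) (hamSymmetrizer N l) := by
  ext i j
  have hi := i.isLt
  have hj := j.isLt
  simp only [hamSymmetrizer, mul_diagonal, diagonal_mul, transpose_apply, Ham, of_apply]
  split_ifs <;> first | omega | ring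

theorem smul_Pantibi_eq {N : ℕ} (hN : 3 ≤ N) (l : ℝ) :
    (1 + l) • Pantibi N l = (hamSymmetrizer N l * (2 - Ham N l)).submatrix id Fin.revPerm := by
  ext i j
  have hi := i.isLt
  have hj := j.isLt
  simp only [hamSymmetrizer, diagonal_mul, Matrix.smul_apply, submatrix_apply, id,
    Fin.revPerm_apply, Matrix.sub_apply, ofNat_apply, Pantibi, Ham, of_apply, Fin.ext_iff,
    Fin.val_rev, smul_eq_mul]
  split_ifs <;> first | omega | ring

theorem stmt9 (N : ℕ) (hN : 3 ≤ N) (l : ℝ) (hl : l ∈ Set.Ioo (-1 : ℝ) 1) :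
    (Ham N l)ᵀ * Pantibi N l = Pantibi N l * Ham N l := by
  have hl₀ : 1 + l ≠ 0 := by linarith [hl.1]
  have hcomm : Commute (Ham N l) (2 - Ham N l) := (Commute.ofNat_right _ 2).sub_right (.refl _)
  have hP : IsPseudometric (Ham N l) ((1 + l) • Pantibi N l) := by
    rw [smul_Pantibi_eq hN l]
    exact ((isPseudometric_hamSymmetrizer hN l).mul_of_commute hcomm).submatrix_id_equiv
      Fin.revPerm (Ham_submatrix_rev hN l)
  exact hP.of_smul hl₀
end

section
/- For λ ∈ (-1,1), every real symmetric 3×3 matrix Θ satisfying H(λ)ᵀΘ = ΘH(λ) with the 3×3 discrete square-well Hamiltonian H(λ) is of the form Θ₁₁ = Θ₃₃ = a, Θ₁₂ = Θ₂₁ = Θ₂₃ = Θ₃₂ = b, Θ₁₃ = Θ₃₁ = c, Θ₂₂ = (a+c)(1+λ)/(1-λ), for some real a, b, c; conversely every matrix of this form satisfies the relation. -/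
open Matrix Polynomial

/-!
For symmetric `Θ`, the relation `Hᵀ Θ = Θ H` says exactly that `Θ H` is symmetric, i.e. three
off-diagonal equations. With `H = H(λ)` the `(0,2)` equation reads `(1 - λ)(Θ₁₂ - Θ₀₁) = 0`, the
`(0,1)` equation determines `Θ₁₁`, and the difference of the `(0,1)` and `(1,2)` equations is
`(1 + λ)(Θ₂₂ - Θ₀₀) = 0`; for `λ ∈ (-1, 1)` both factors `1 ± λ` are nonzero.
-/

namespace Matrix

variable {n α : Type*}

theorem IsSymm.transpose_mul_eq_mul_iff_isSymm_mul [Fintype n] [CommSemiring α]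
    {Θ : Matrix n n α} (hΘ : Θ.IsSymm) (H : Matrix n n α) : Hᵀ * Θ = Θ * H ↔ (Θ * H).IsSymm := by
  rw [IsSymm, transpose_mul, hΘ.eq, eq_comm]

theorem isSymm_fin_three (p q r s t u : α) : (!![p, q, r; q, s, t; r, t, u]).IsSymm := by
  refine IsSymm.ext fun i j => ?_
  fin_cases i <;> fin_cases j <;> rfl

theorem IsSymm.exists_eq_fin_three {Θ : Matrix (Fin 3) (Fin 3) α} (hΘ : Θ.IsSymm) :
    ∃ p q r s t u, Θ = !![p, q, r; q, s, t; r, t, u] :=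
  ⟨Θ 0 0, Θ 0 1, Θ 0 2, Θ 1 1, Θ 1 2, Θ 2 2, by
    conv_lhs => rw [eta_fin_three Θ]
    rw [hΘ.apply 0 1, hΘ.apply 0 2, hΘ.apply 1 2]⟩

end Matrix

theorem ham_three (l : ℝ) : Ham 3 l = !![2, -1 - l, 0; -1 + l, 2, -1 + l; 0, -1 - l, 2] := by
  ext i j
  fin_cases i <;> fin_cases j <;> simp [Ham]

theorem isSymm_mul_ham_three_iff {K : Type*} [Field K] {l : K} (h₁ : 1 - l ≠ 0) (h₂ : 1 + l ≠ 0)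
    (p q r s t u : K) :
    (!![p, q, r; q, s, t; r, t, u] * !![2, -1 - l, 0; -1 + l, 2, -1 + l; 0, -1 - l, 2]).IsSymm ↔
      s = (p + r) * (1 + l) / (1 - l) ∧ t = q ∧ u = p := by
  rw [mul_fin_three, IsSymm.ext_iff]
  simp only [Fin.forall_fin_succ, of_apply, cons_val', cons_val_fin_one, cons_val_zero,
    cons_val_succ, mul_zero, add_zero, zero_add, forall_const, true_and, and_true]
  constructor
  · rintro ⟨⟨h01, h02⟩, -, -, h12⟩
    refine ⟨?_, ?_, ?_⟩
    · rw [eq_div_iff h₁]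
      linear_combination -h01
    · exact mul_left_cancel₀ h₁ (by linear_combination -h02)
    · exact mul_left_cancel₀ h₂ (by linear_combination h12 - h01)
  · rintro ⟨rfl, rfl, rfl⟩
    refine ⟨⟨?_, ?_⟩, ⟨?_, ?_⟩, ?_, ?_⟩ <;> field_simp <;> ring

theorem stmt10 (l : ℝ) (hl : l ∈ Set.Ioo (-1 : ℝ) 1) (Θ : Matrix (Fin 3) (Fin 3) ℝ) :
    (Θ.IsSymm ∧ (Ham 3 l)ᵀ * Θ = Θ * Ham 3 l) ↔
    ∃ a b c : ℝ,
      Θ = !![a, b, c;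
             b, (a + c) * (1 + l) / (1 - l), b;
             c, b, a] := by
  have h₁ : 1 - l ≠ 0 := by linarith [hl.2]
  have h₂ : 1 + l ≠ 0 := by linarith [hl.1]
  rw [ham_three]
  constructor
  · rintro ⟨hΘ, hcomm⟩
    obtain ⟨p, q, r, s, t, u, rfl⟩ := hΘ.exists_eq_fin_three
    rw [hΘ.transpose_mul_eq_mul_iff_isSymm_mul, isSymm_mul_ham_three_iff h₁ h₂] at hcomm
    obtain ⟨rfl, rfl, rfl⟩ := hcomm
    exact ⟨_, _, _, rfl⟩
  · rintro ⟨a, b, c, rfl⟩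
    have hΘ := isSymm_fin_three a b c ((a + c) * (1 + l) / (1 - l)) b a
    refine ⟨hΘ, (hΘ.transpose_mul_eq_mul_iff_isSymm_mul _).2 ?_⟩
    exact (isSymm_mul_ham_three_iff h₁ h₂ ..).2 ⟨rfl, rfl, rfl⟩
end

section
/- For λ ∈ (-1,1), every real symmetric 4×4 matrix Θ satisfying H(λ)ᵀΘ = ΘH(λ), where H(λ) is the 4×4 discrete square-well Hamiltonian, has the four-parameter form Θ₁₁=Θ₄₄=a, Θ₁₂=Θ₃₄=b, Θ₁₃=Θ₂₄=c, Θ₁₄=d, Θ₂₂=Θ₃₃=(c+a(1+λ))/(1-λ), Θ₂₃=(b+d(1+λ))/(1-λ), and Θ symmetric; conversely all such matrices satisfy the relation. -/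
open Matrix Polynomial

/-! Since `(Ham 4 l)ᵀ = Ham 4 (-l)`, the defect `Ham 4 (-l) * Θ - Θ * Ham 4 l` of a symmetric
`Θ` is antisymmetric, so the relation amounts to its six entries above the diagonal vanishing.
These six linear equations can be solved one after another for the six entries of `Θ` not
determined by its first row and symmetry, dividing by `1 - l` and `1 + l`. -/

theorem Ham_transpose (N : ℕ) (l : ℝ) : (Ham N l)ᵀ = Ham N (-l) := by
  ext i j
  simp only [Ham, transpose_apply, of_apply]
  split_ifs <;> first | omega | ring

theorem Ham_four (l : ℝ) : Ham 4 l =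
    !![2, -1 - l, 0, 0; -1 + l, 2, -1, 0; 0, -1, 2, -1 + l; 0, 0, -1 - l, 2] := by
  ext i j
  fin_cases i <;> fin_cases j <;> norm_num [Ham]

noncomputable def squareWellMetric (l a b c d : ℝ) : Matrix (Fin 4) (Fin 4) ℝ :=
  !![a, b, c, d;
     b, (c + a * (1 + l)) / (1 - l), (b + d * (1 + l)) / (1 - l), c;
     c, (b + d * (1 + l)) / (1 - l), (c + a * (1 + l)) / (1 - l), b;
     d, c, b, a]

theorem isSymm_squareWellMetric (l a b c d : ℝ) : (squareWellMetric l a b c d).IsSymm := by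
  ext i j
  fin_cases i <;> fin_cases j <;> rfl

theorem Ham_four_neg_mul_squareWellMetric {l : ℝ} (hl : 1 - l ≠ 0) (a b c d : ℝ) :
    Ham 4 (-l) * squareWellMetric l a b c d = squareWellMetric l a b c d * Ham 4 l := by
  rw [Ham_four, Ham_four]
  ext i j
  fin_cases i <;> fin_cases j <;>
    · simp [squareWellMetric, mul_apply, Fin.sum_univ_four]
      field_simp <;> ring

theorem eq_squareWellMetric_of_isSymm_of_Ham_four_neg_mul_eq {l : ℝ} (hl₁ : 1 - l ≠ 0)
    (hl₂ : 1 + l ≠ 0) {Θ : Matrix (Fin 4) (Fin 4) ℝ} (hs : Θ.IsSymm)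
    (h : Ham 4 (-l) * Θ = Θ * Ham 4 l) :
    Θ = squareWellMetric l (Θ 0 0) (Θ 0 1) (Θ 0 2) (Θ 0 3) := by
  rw [Ham_four, Ham_four] at h
  have e01 := congrFun₂ h 0 1
  have e02 := congrFun₂ h 0 2
  have e03 := congrFun₂ h 0 3
  have e12 := congrFun₂ h 1 2
  have e13 := congrFun₂ h 1 3
  have e23 := congrFun₂ h 2 3
  simp only [mul_apply, Fin.sum_univ_four, of_apply, cons_val', cons_val, empty_val',
    cons_val_fin_one] at e01 e02 e03 e12 e13 e23
  have k11 : (1 - l) * Θ 1 1 = Θ 0 2 + Θ 0 0 * (1 + l) := by linear_combination -e01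
  have k12 : (1 - l) * Θ 1 2 = Θ 0 1 + Θ 0 3 * (1 + l) := by linear_combination -e02
  have h13 : Θ 1 3 = Θ 0 2 := mul_left_cancel₀ hl₁ (by linear_combination -e03)
  have h22 : Θ 2 2 = Θ 1 1 := by linear_combination -e12 + (1 + l) * h13
  have h23 : Θ 2 3 = Θ 0 1 := by linear_combination -e13 + k12
  have h33 : Θ 3 3 = Θ 0 0 :=
    mul_left_cancel₀ hl₂ (by linear_combination -e23 - h13 + (1 - l) * h22 + k11)
  have h11 : Θ 1 1 = (Θ 0 2 + Θ 0 0 * (1 + l)) / (1 - l) := by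
    rw [eq_div_iff hl₁, mul_comm, k11]
  have h12 : Θ 1 2 = (Θ 0 1 + Θ 0 3 * (1 + l)) / (1 - l) := by
    rw [eq_div_iff hl₁, mul_comm, k12]
  ext i j
  fin_cases i <;> fin_cases j <;>
    simp [squareWellMetric, hs.apply 0 1, hs.apply 0 2, hs.apply 0 3, hs.apply 1 2, hs.apply 1 3,
      hs.apply 2 3, h11, h12, h13, h22, h23, h33]

theorem stmt11 (l : ℝ) (hl : l ∈ Set.Ioo (-1 : ℝ) 1) (Θ : Matrix (Fin 4) (Fin 4) ℝ) :
    (Θ.IsSymm ∧ (Ham 4 l)ᵀ * Θ = Θ * Ham 4 l) ↔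
    ∃ a b c d : ℝ,
      Θ = !![a, b, c, d;
             b, (c + a * (1 + l)) / (1 - l), (b + d * (1 + l)) / (1 - l), c;
             c, (b + d * (1 + l)) / (1 - l), (c + a * (1 + l)) / (1 - l), b;
             d, c, b, a] := by
  have hl₁ : 1 - l ≠ 0 := by linarith [hl.2]
  have hl₂ : 1 + l ≠ 0 := by linarith [hl.1]
  rw [Ham_transpose]
  constructor
  · rintro ⟨hs, h⟩
    exact ⟨_, _, _, _, eq_squareWellMetric_of_isSymm_of_Ham_four_neg_mul_eq hl₁ hl₂ hs h⟩
  · rintro ⟨a, b, c, d, rfl⟩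
    exact ⟨isSymm_squareWellMetric l a b c d, Ham_four_neg_mul_squareWellMetric hl₁ a b c d⟩
end

section
/- For λ ∈ (-1,1), the real vector space of 3×3 real symmetric matrices Θ satisfying H(λ)ᵀΘ = ΘH(λ) with the 3×3 discrete square-well Hamiltonian H(λ) has dimension exactly 3. -/
open Matrix Polynomial

/-- The real vector space of symmetric solutions Θ of H(λ)ᵀ Θ = Θ H(λ). -/
noncomputable def solSpace (N : ℕ) (l : ℝ) : Submodule ℝ (Matrix (Fin N) (Fin N) ℝ) where
  carrier := {Θ | Θ.IsSymm ∧ (Ham N l)ᵀ * Θ = Θ * Ham N l}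
  add_mem' := by
    rintro a b ⟨ha1, ha2⟩ ⟨hb1, hb2⟩
    refine ⟨?_, ?_⟩
    · show (a + b)ᵀ = a + b
      rw [Matrix.transpose_add, ha1, hb1]
    · rw [Matrix.mul_add, Matrix.add_mul, ha2, hb2]
  zero_mem' := by
    refine ⟨?_, by simp⟩
    show (0 : Matrix (Fin N) (Fin N) ℝ)ᵀ = 0
    simp
  smul_mem' := by
    rintro c a ⟨ha1, ha2⟩
    refine ⟨?_, ?_⟩
    · show (c • a)ᵀ = c • a
      rw [Matrix.transpose_smul, ha1]
    · rw [Matrix.mul_smul, Matrix.smul_mul, ha2]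

/-!
A symmetric solution Θ is determined by its first row `(a, b, c)`: the `(0,1)`, `(0,2)` and
`(1,2)` entries of `H(λ)ᵀ Θ = Θ H(λ)` force `Θ 1 1 = k (a + c)`, `Θ 1 2 = b` and `Θ 2 2 = a`
with `k = (1 + λ) / (1 - λ)`, and conversely every such matrix is a solution. Hence taking
the first row is a linear isomorphism from the solution space onto `ℝ³`.
-/

noncomputable def thetaOfFirstRow (l : ℝ) (v : Fin 3 → ℝ) : Matrix (Fin 3) (Fin 3) ℝ :=
  !![v 0, v 1, v 2; v 1, (1 + l) / (1 - l) * (v 0 + v 2), v 1; v 2, v 1, v 0]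

theorem thetaOfFirstRow_mem_solSpace {l : ℝ} (hl : l ≠ 1) (v : Fin 3 → ℝ) :
    thetaOfFirstRow l v ∈ solSpace 3 l := by
  have h1_sub : 1 - l ≠ 0 := sub_ne_zero.2 hl.symm
  refine ⟨?_, ?_⟩
  · ext i j
    fin_cases i <;> fin_cases j <;> rfl
  · ext i j
    fin_cases i <;> fin_cases j <;>
      simp [thetaOfFirstRow, Ham, mul_apply, Fin.sum_univ_three] <;> field_simp <;> ring

theorem eq_thetaOfFirstRow_of_mem_solSpace {l : ℝ} (hl₁ : l ≠ 1) (hl₂ : l ≠ -1)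
    {Θ : Matrix (Fin 3) (Fin 3) ℝ} (hΘ : Θ ∈ solSpace 3 l) : Θ = thetaOfFirstRow l (Θ 0) := by
  obtain ⟨hsym, hcomm⟩ := hΘ
  have e01 := congrFun (congrFun hcomm 0) 1
  have e02 := congrFun (congrFun hcomm 0) 2
  have e12 := congrFun (congrFun hcomm 1) 2
  simp only [Ham, mul_apply, Fin.sum_univ_three, transpose_apply, of_apply] at e01 e02 e12
  norm_num at e01 e02 e12
  have h1_sub : 1 - l ≠ 0 := sub_ne_zero.2 hl₁.symm
  have h1_add : 1 + l ≠ 0 := fun h => hl₂ (by linarith)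
  have h11 : Θ 1 1 = (1 + l) / (1 - l) * (Θ 0 0 + Θ 0 2) := by
    field_simp
    linarith
  have h12 : Θ 1 2 = Θ 0 1 := mul_left_cancel₀ h1_sub (by linarith)
  have h22 : Θ 2 2 = Θ 0 0 := mul_left_cancel₀ h1_add (by linarith)
  ext i j
  fin_cases i <;> fin_cases j <;>
    simp [thetaOfFirstRow, h11, h12, h22, hsym.apply 0 1, hsym.apply 0 2, hsym.apply 1 2]

noncomputable def solSpaceThreeEquivFirstRow {l : ℝ} (hl₁ : l ≠ 1) (hl₂ : l ≠ -1) :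
    solSpace 3 l ≃ₗ[ℝ] (Fin 3 → ℝ) where
  toFun Θ := Θ.1 0
  invFun v := ⟨thetaOfFirstRow l v, thetaOfFirstRow_mem_solSpace hl₁ v⟩
  map_add' _ _ := rfl
  map_smul' _ _ := rfl
  left_inv Θ := Subtype.ext (eq_thetaOfFirstRow_of_mem_solSpace hl₁ hl₂ Θ.2).symm
  right_inv v := by
    ext i
    fin_cases i <;> rfl

theorem stmt13 (l : ℝ) (hl : l ∈ Set.Ioo (-1 : ℝ) 1) :
    Module.finrank ℝ (solSpace 3 l) = 3 := by
  obtain ⟨hl_gt, hl_lt⟩ := hl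
  rw [(solSpaceThreeEquivFirstRow hl_lt.ne hl_gt.ne').finrank_eq, Module.finrank_fin_fun]
end

section
/- For λ ∈ ℝ, with γ = (1-λ)/(1+λ²) and δ = 1/(1+λ²), the 6×6 matrix P₄ with nonzero entries P₄(1,4)=P₄(4,1)=P₄(3,6)=P₄(6,3)=γ, P₄(2,3)=P₄(3,2)=P₄(2,5)=P₄(5,2)=P₄(4,5)=P₄(5,4)=δ, P₄(3,4)=P₄(4,3)=1, satisfies H(λ)ᵀ P₄ = P₄ H(λ) with the 6×6 discrete square-well Hamiltonian H(λ). -/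
open Matrix Polynomial

/-- The pseudometric P₄ for N = 6, with γ = (1-λ)/(1+λ²), δ = 1/(1+λ²). -/
noncomputable def P4 (l : ℝ) : Matrix (Fin 6) (Fin 6) ℝ :=
  let γ := (1 - l) / (1 + l ^ 2)
  let δ := 1 / (1 + l ^ 2)
  !![0, 0, 0, γ, 0, 0;
     0, 0, δ, 0, δ, 0;
     0, δ, 0, 1, 0, γ;
     γ, 0, 1, 0, δ, 0;
     0, δ, 0, δ, 0, 0;
     0, 0, γ, 0, 0, 0]

/-!
Since γ = (1 - λ)δ and 1 = (1 + λ²)δ, P₄ is δ times a matrix `P4Poly λ` with polynomial entries,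
and the scalar δ passes through the intertwining relation. What remains is a polynomial identity
between two explicit 6×6 products, checked entry by entry.
-/

def P4Poly (l : ℝ) : Matrix (Fin 6) (Fin 6) ℝ :=
  !![0, 0, 0, 1 - l, 0, 0;
     0, 0, 1, 0, 1, 0;
     0, 1, 0, 1 + l ^ 2, 0, 1 - l;
     1 - l, 0, 1 + l ^ 2, 0, 1, 0;
     0, 1, 0, 1, 0, 0;
     0, 0, 1 - l, 0, 0, 0]

lemma Ham_six (l : ℝ) : Ham 6 l =
    !![2, -1 - l, 0, 0, 0, 0;
       -1 + l, 2, -1, 0, 0, 0;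
       0, -1, 2, -1, 0, 0;
       0, 0, -1, 2, -1, 0;
       0, 0, 0, -1, 2, -1 + l;
       0, 0, 0, 0, -1 - l, 2] := by
  ext i j
  fin_cases i <;> fin_cases j <;> rfl

lemma P4_eq_smul_P4Poly (l : ℝ) : P4 l = (1 + l ^ 2)⁻¹ • P4Poly l := by
  have h : (1 : ℝ) + l ^ 2 ≠ 0 := by positivity
  ext i j
  fin_cases i <;> fin_cases j <;> simp [P4, P4Poly, div_eq_inv_mul, h]

lemma Ham_six_transpose_mul_P4Poly (l : ℝ) :
    (Ham 6 l)ᵀ * P4Poly l = P4Poly l * Ham 6 l := by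
  rw [Ham_six]
  ext i j
  fin_cases i <;> fin_cases j <;>
    simp [P4Poly, mul_apply, Fin.sum_univ_six] <;> ring

lemma transpose_mul_smul_eq_smul_mul {n R : Type*} [Fintype n] [CommSemiring R]
    {H P : Matrix n n R} (hHP : Hᵀ * P = P * H) (c : R) : Hᵀ * (c • P) = (c • P) * H := by
  rw [Matrix.mul_smul, Matrix.smul_mul, hHP]

theorem stmt15 (l : ℝ) : (Ham 6 l)ᵀ * P4 l = P4 l * Ham 6 l := by
  rw [P4_eq_smul_P4Poly]
  exact transpose_mul_smul_eq_smul_mul (Ham_six_transpose_mul_P4Poly l) _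
end

section
/- For λ ∈ (-1,1), every real symmetric 5×5 matrix Θ satisfying H(λ)ᵀΘ = ΘH(λ) with the 5×5 discrete square-well Hamiltonian is determined by its five first-row entries (a,b,c,d,e) via: Θ is persymmetric (Θ_{i,j}=Θ_{6-j,6-i}), Θ₂₂=Θ₄₄=(c+a(1+λ))/(1-λ), Θ₂₃=Θ₃₄=(b+d)/(1-λ), Θ₂₄=(c+e(1+λ))/(1-λ), Θ₃₃=(c+a(1+λ))/(1-λ)+(c+e(1+λ))/(1-λ)-c(1+λ); hence the solution space has dimension 5. -/
open Matrix Polynomial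

lemma entriesAux (l : ℝ) (h1 : (1:ℝ) - l ≠ 0) (h2 : (1:ℝ) + l ≠ 0)
    (Θ : Matrix (Fin 5) (Fin 5) ℝ)
    (hc : (Ham 5 l)ᵀ * Θ = Θ * Ham 5 l) :
    Θ 1 1 = (Θ 0 2 + Θ 0 0 * (1+l))/(1-l) ∧
    Θ 1 2 = (Θ 0 1 + Θ 0 3)/(1-l) ∧
    Θ 1 3 = (Θ 0 2 + Θ 0 4 * (1+l))/(1-l) ∧
    Θ 1 4 = Θ 0 3 ∧
    Θ 2 2 = (Θ 0 2 + Θ 0 0 * (1+l))/(1-l) + (Θ 0 2 + Θ 0 4 * (1+l))/(1-l) - Θ 0 2 * (1+l) ∧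
    Θ 2 3 = (Θ 0 1 + Θ 0 3)/(1-l) ∧
    Θ 2 4 = Θ 0 2 ∧
    Θ 3 3 = (Θ 0 2 + Θ 0 0 * (1+l))/(1-l) ∧
    Θ 3 4 = Θ 0 1 ∧
    Θ 4 4 = Θ 0 0 := by
  have e01 := congr_fun (congr_fun hc 0) 1
  have e02 := congr_fun (congr_fun hc 0) 2
  have e03 := congr_fun (congr_fun hc 0) 3
  have e04 := congr_fun (congr_fun hc 0) 4
  have e12 := congr_fun (congr_fun hc 1) 2
  have e13 := congr_fun (congr_fun hc 1) 3
  have e14 := congr_fun (congr_fun hc 1) 4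
  have e23 := congr_fun (congr_fun hc 2) 3
  have e24 := congr_fun (congr_fun hc 2) 4
  have e34 := congr_fun (congr_fun hc 3) 4
  simp only [Matrix.mul_apply, Fin.sum_univ_five, Ham, Matrix.transpose_apply,
    Matrix.of_apply, show ((0:Fin 5):ℕ)=0 from rfl, show ((1:Fin 5):ℕ)=1 from rfl,
    show ((2:Fin 5):ℕ)=2 from rfl, show ((3:Fin 5):ℕ)=3 from rfl,
    show ((4:Fin 5):ℕ)=4 from rfl] at e01 e02 e03 e04 e12 e13 e14 e23 e24 e34
  norm_num at e01 e02 e03 e04 e12 e13 e14 e23 e24 e34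
  have t11 : Θ 1 1 = (Θ 0 2 + Θ 0 0 * (1+l))/(1-l) := by
    rw [eq_div_iff h1]; linear_combination -e01
  have t12 : Θ 1 2 = (Θ 0 1 + Θ 0 3)/(1-l) := by
    rw [eq_div_iff h1]; linear_combination -e02
  have t13 : Θ 1 3 = (Θ 0 2 + Θ 0 4 * (1+l))/(1-l) := by
    rw [eq_div_iff h1]; linear_combination -e03
  have t14 : Θ 1 4 = Θ 0 3 := by
    have h : (1-l) * Θ 1 4 = (1-l) * Θ 0 3 := by linear_combination -e04
    exact mul_left_cancel₀ h1 h
  have h13 : (1-l) * Θ 1 3 = Θ 0 2 + Θ 0 4 * (1+l) := by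
    rw [t13]; field_simp
  have h11 : (1-l) * Θ 1 1 = Θ 0 2 + Θ 0 0 * (1+l) := by
    rw [t11]; field_simp
  have t22 : Θ 2 2 = (Θ 0 2 + Θ 0 0 * (1+l))/(1-l) + (Θ 0 2 + Θ 0 4 * (1+l))/(1-l)
      - Θ 0 2 * (1+l) := by
    rw [← t11, ← t13]; linarith [e12]
  have t23 : Θ 2 3 = (Θ 0 1 + Θ 0 3)/(1-l) := by
    rw [← t12]; rw [t14] at e13; linarith [e13]
  have t24 : Θ 2 4 = Θ 0 2 := by
    linear_combination -e14 + h13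
  have t33 : Θ 3 3 = (Θ 0 2 + Θ 0 0 * (1+l))/(1-l) := by
    linear_combination -e23 + t22 - t13 + (1+l) * t24
  have h23 : (1-l) * Θ 2 3 = Θ 0 1 + Θ 0 3 := by
    rw [t23]; field_simp
  have t34 : Θ 3 4 = Θ 0 1 := by
    linear_combination -e24 + h23 - t14
  have h33 : (1-l) * Θ 3 3 = Θ 0 2 + Θ 0 0 * (1+l) := by
    rw [t33]; field_simp
  have t44 : Θ 4 4 = Θ 0 0 := by
    have h : (1+l) * Θ 4 4 = (1+l) * Θ 0 0 := by
      linear_combination -e34 + h33 - t24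
    exact mul_left_cancel₀ h2 h
  exact ⟨t11, t12, t13, t14, t22, t23, t24, t33, t34, t44⟩

noncomputable def mkTheta (l : ℝ) (v : Fin 5 → ℝ) : Matrix (Fin 5) (Fin 5) ℝ :=
  !![v 0, v 1, v 2, v 3, v 4;
     v 1, (v 2 + v 0 * (1+l))/(1-l), (v 1 + v 3)/(1-l), (v 2 + v 4 * (1+l))/(1-l), v 3;
     v 2, (v 1 + v 3)/(1-l),
       (v 2 + v 0 * (1+l))/(1-l) + (v 2 + v 4 * (1+l))/(1-l) - v 2 * (1+l),
       (v 1 + v 3)/(1-l), v 2;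
     v 3, (v 2 + v 4 * (1+l))/(1-l), (v 1 + v 3)/(1-l), (v 2 + v 0 * (1+l))/(1-l), v 1;
     v 4, v 3, v 2, v 1, v 0]

lemma mkTheta_persymm (l : ℝ) (v : Fin 5 → ℝ) (i j : Fin 5) :
    mkTheta l v i j = mkTheta l v j.rev i.rev := by
  fin_cases i <;> fin_cases j <;>
    simp [mkTheta, Fin.rev, Matrix.cons_val_zero, Matrix.cons_val_one, Matrix.head_cons,
      Matrix.cons_val_two, Matrix.cons_val_three, Matrix.cons_val_four,
      Matrix.head_fin_const, Matrix.tail_cons]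

set_option maxHeartbeats 2000000 in
lemma mkTheta_mem (l : ℝ) (h1 : (1:ℝ) - l ≠ 0) (v : Fin 5 → ℝ) :
    mkTheta l v ∈ solSpace 5 l := by
  constructor
  · show (mkTheta l v)ᵀ = mkTheta l v
    ext i j
    fin_cases i <;> fin_cases j <;>
      simp [mkTheta, Matrix.transpose_apply, Matrix.cons_val_zero, Matrix.cons_val_one,
        Matrix.head_cons, Matrix.cons_val_two, Matrix.cons_val_three, Matrix.cons_val_four,
        Matrix.head_fin_const, Matrix.tail_cons]
  · ext i j
    fin_cases i <;> fin_cases j <;>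
      simp only [show ((⟨0, by norm_num⟩:Fin 5)) = 0 from rfl,
        show ((⟨1, by norm_num⟩:Fin 5)) = 1 from rfl,
        show ((⟨2, by norm_num⟩:Fin 5)) = 2 from rfl,
        show ((⟨3, by norm_num⟩:Fin 5)) = 3 from rfl,
        show ((⟨4, by norm_num⟩:Fin 5)) = 4 from rfl] <;>
      simp only [Matrix.mul_apply, Fin.sum_univ_five, Ham, Matrix.transpose_apply,
        Matrix.of_apply, mkTheta, show ((0:Fin 5):ℕ)=0 from rfl,
        show ((1:Fin 5):ℕ)=1 from rfl, show ((2:Fin 5):ℕ)=2 from rfl,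
        show ((3:Fin 5):ℕ)=3 from rfl, show ((4:Fin 5):ℕ)=4 from rfl,
        Matrix.cons_val_zero, Matrix.cons_val_one, Matrix.head_cons, Matrix.cons_val_two,
        Matrix.cons_val_three, Matrix.cons_val_four, Matrix.head_fin_const,
        Matrix.tail_cons] <;>
      norm_num <;>
      (try field_simp) <;>
      ring

set_option maxHeartbeats 1000000 in
lemma recon (l : ℝ) (h1 : (1:ℝ) - l ≠ 0) (h2 : (1:ℝ) + l ≠ 0)
    (Θ : Matrix (Fin 5) (Fin 5) ℝ) (hs : Θ.IsSymm)
    (hc : (Ham 5 l)ᵀ * Θ = Θ * Ham 5 l) : Θ = mkTheta l (Θ 0) := by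
  obtain ⟨t11, t12, t13, t14, t22, t23, t24, t33, t34, t44⟩ := entriesAux l h1 h2 Θ hc
  have hsym : ∀ i j, Θ j i = Θ i j := fun i j => congr_fun (congr_fun hs i) j
  ext i j
  fin_cases i <;> fin_cases j <;>
    simp only [show ((⟨0, by norm_num⟩:Fin 5)) = 0 from rfl,
      show ((⟨1, by norm_num⟩:Fin 5)) = 1 from rfl,
      show ((⟨2, by norm_num⟩:Fin 5)) = 2 from rfl,
      show ((⟨3, by norm_num⟩:Fin 5)) = 3 from rfl,
      show ((⟨4, by norm_num⟩:Fin 5)) = 4 from rfl] <;>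
    simp only [mkTheta, Matrix.cons_val_zero, Matrix.cons_val_one, Matrix.head_cons,
      Matrix.cons_val_two, Matrix.cons_val_three, Matrix.cons_val_four,
      Matrix.head_fin_const, Matrix.tail_cons, Matrix.of_apply] <;>
    simp only [hsym 0 1, hsym 0 2, hsym 0 3, hsym 0 4, hsym 1 2, hsym 1 3, hsym 1 4,
      hsym 2 3, hsym 2 4, hsym 3 4, t11, t12, t13, t14, t22, t23, t24, t33, t34, t44]

theorem stmt19 (l : ℝ) (hl : l ∈ Set.Ioo (-1 : ℝ) 1) :
    (∀ Θ : Matrix (Fin 5) (Fin 5) ℝ, Θ.IsSymm → (Ham 5 l)ᵀ * Θ = Θ * Ham 5 l →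
      (∀ i j : Fin 5, Θ i j = Θ j.rev i.rev) ∧
      Θ 1 1 = (Θ 0 2 + Θ 0 0 * (1 + l)) / (1 - l) ∧
      Θ 3 3 = (Θ 0 2 + Θ 0 0 * (1 + l)) / (1 - l) ∧
      Θ 1 2 = (Θ 0 1 + Θ 0 3) / (1 - l) ∧
      Θ 2 3 = (Θ 0 1 + Θ 0 3) / (1 - l) ∧
      Θ 1 3 = (Θ 0 2 + Θ 0 4 * (1 + l)) / (1 - l) ∧
      Θ 2 2 = (Θ 0 2 + Θ 0 0 * (1 + l)) / (1 - l)
                + (Θ 0 2 + Θ 0 4 * (1 + l)) / (1 - l) - Θ 0 2 * (1 + l)) ∧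
    Module.finrank ℝ (solSpace 5 l) = 5 := by
  obtain ⟨hlm, hlp⟩ := hl
  have h1 : (1:ℝ) - l ≠ 0 := by linarith
  have h2 : (1:ℝ) + l ≠ 0 := by linarith
  constructor
  · intro Θ hs hc
    obtain ⟨t11, t12, t13, t14, t22, t23, t24, t33, t34, t44⟩ := entriesAux l h1 h2 Θ hc
    refine ⟨?_, t11, t33, t12, t23, t13, t22⟩
    intro i j
    conv_lhs => rw [recon l h1 h2 Θ hs hc]
    conv_rhs => rw [recon l h1 h2 Θ hs hc]
    exact mkTheta_persymm l (Θ 0) i j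
  · let f : solSpace 5 l →ₗ[ℝ] (Fin 5 → ℝ) :=
      { toFun := fun Θ => fun j => (Θ : Matrix (Fin 5) (Fin 5) ℝ) 0 j
        map_add' := fun a b => rfl
        map_smul' := fun c a => rfl }
    have hbij : Function.Bijective f := by
      constructor
      · rintro ⟨ΘA, hsA, hcA⟩ ⟨ΘB, hsB, hcB⟩ hAB
        simp only [f, LinearMap.coe_mk, AddHom.coe_mk] at hAB
        have hrow : ΘA 0 = ΘB 0 := funext fun j => congr_fun hAB j
        apply Subtype.ext
        show ΘA = ΘB
        rw [recon l h1 h2 ΘA hsA hcA, recon l h1 h2 ΘB hsB hcB, hrow]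
      · intro v
        refine ⟨⟨mkTheta l v, mkTheta_mem l h1 v⟩, ?_⟩
        funext j
        fin_cases j <;> rfl
    rw [LinearEquiv.finrank_eq (LinearEquiv.ofBijective f hbij)]
    simp
end
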